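/- arXiv:math/0407240 — 6 statements merged into one kernel-verified Lean document; each statement's English description precedes it below -/
import Mathlib

section
/- Let K be a field with |K| ≥ n and let V be an n-dimensional K-vector space. If A, B ∈ End(V) are such that every element of the span of A and B is non-invertible, then there exist subspaces U, W of V with dim W < dim U such that both A and B map U into W. -/
open Polynomial Matrix

/-- A non-bijective endomorphism of a f.d. space has zero determinant. -/
lemma aux_det_zero {K V : Type*} [Field K] [AddCommGroup V] [Module K V]
    [FiniteDimensional K V] (f : V →ₗ[K] V) (hf : ¬ Function.Bijective f) :
    LinearMap.det f = 0 := by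
  by_contra h
  exact hf (LinearMap.equivOfDetNeZero f h).bijective

/-- Any two-dimensional singular space of endomorphisms (over a sufficiently
large field) is a compression space. -/
theorem stmt3 {K V : Type*} [Field K] [AddCommGroup V] [Module K V]
    [FiniteDimensional K V] (n : ℕ) (hV : Module.finrank K V = n)
    (hK : (n : Cardinal) ≤ Cardinal.mk K)
    (A B : V →ₗ[K] V)
    (hsing : ∀ s t : K, ¬ Function.Bijective (s • A + t • B)) :
    ∃ U W : Submodule K V, Module.finrank K W < Module.finrank K U ∧
      U.map A ≤ W ∧ U.map B ≤ W := by
  classical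
  -- trivial case: n = 0 is impossible
  rcases Nat.eq_zero_or_pos n with hn0 | hn0
  · exfalso
    have hsub : Subsingleton V := by
      rw [hn0] at hV
      exact (Module.finrank_zero_iff (R := K)).mp hV
    exact hsing 0 0 ⟨fun a b _ => Subsingleton.elim a b, fun x => ⟨x, Subsingleton.elim _ _⟩⟩
  -- set up matrices
  let b : Module.Basis (Fin n) K V := Module.finBasisOfFinrankEq K V hV
  set M : Matrix (Fin n) (Fin n) K := LinearMap.toMatrix b b A with hM
  set N : Matrix (Fin n) (Fin n) K := LinearMap.toMatrix b b B with hN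
  have hdet : ∀ s : K, (s • M + N).det = 0 := by
    intro s
    have hb : LinearMap.det (s • A + B) = 0 := by
      apply aux_det_zero
      have := hsing s 1
      rwa [one_smul] at this
    have h2 : (LinearMap.toMatrix b b (s • A + B)).det = 0 := by
      rw [LinearMap.det_toMatrix]; exact hb
    rwa [map_add, LinearEquiv.map_smul] at h2
  have hdetA : M.det = 0 := by
    have hb : LinearMap.det A = 0 := by
      apply aux_det_zero
      have := hsing 1 0
      rwa [one_smul, zero_smul, add_zero] at this
    rw [← LinearMap.det_toMatrix b] at hb; exact hb
  -- the determinant polynomial vanishes identically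
  set p : K[X] := Matrix.det ((X : K[X]) • M.map C + N.map C) with hp
  have heval : ∀ s : K, p.eval s = (s • M + N).det := by
    intro s
    have h1 := RingHom.map_det (Polynomial.evalRingHom s) ((X : K[X]) • M.map C + N.map C)
    have h2 : (Polynomial.evalRingHom s).mapMatrix ((X : K[X]) • M.map C + N.map C)
        = s • M + N := by
      ext i j
      simp only [RingHom.mapMatrix_apply, Matrix.map_apply, Matrix.add_apply,
        Matrix.smul_apply, smul_eq_mul, Polynomial.coe_evalRingHom, Polynomial.eval_add,
        Polynomial.eval_mul, Polynomial.eval_X, Polynomial.eval_C]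
    rw [hp]
    change (Polynomial.evalRingHom s) _ = _
    rw [h1, h2]
  have hp0 : p = 0 := by
    apply Polynomial.eq_zero_of_forall_eval_zero_of_natDegree_lt_card
    · intro s; rw [heval]; exact hdet s
    · have h1 : p.natDegree ≤ n := by
        simpa using Polynomial.natDegree_det_X_add_C_le M N
      have h2 : p.coeff n = 0 := by
        have := Polynomial.coeff_det_X_add_C_card M N
        simp only [Fintype.card_fin] at this
        rw [hp, this, hdetA]
      have h3 : p.natDegree < n := by
        by_cases hpz : p = 0
        · rw [hpz, Polynomial.natDegree_zero]; exact hn0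
        · rcases h1.lt_or_eq with h | h
          · exact h
          · exfalso
            apply Polynomial.leadingCoeff_ne_zero.mpr hpz
            rw [Polynomial.leadingCoeff, h, h2]
      exact lt_of_lt_of_le (by exact_mod_cast h3) hK
  -- extract a polynomial kernel vector
  obtain ⟨v, hv0, hvz⟩ : ∃ v, v ≠ 0 ∧ ((X : K[X]) • M.map C + N.map C).mulVec v = 0 := by
    have := (Matrix.exists_mulVec_eq_zero_iff
      (M := (X : K[X]) • M.map C + N.map C)).mpr hp0
    obtain ⟨v, hv, hvz⟩ := this
    exact ⟨v, hv, hvz⟩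
  -- the coefficient vectors
  set c : ℕ → Fin n → K := fun d i => (v i).coeff d with hc
  set x : ℕ → V := fun d => b.equivFun.symm (c d) with hx
  have hreprx : ∀ d, ⇑(b.repr (x d)) = c d := by
    intro d
    have : b.equivFun (x d) = c d := by rw [hx]; exact b.equivFun.apply_symm_apply _
    funext i
    rw [← this]; rfl
  -- the key coefficient relations
  have hent : ∀ i, ∑ j, (C (M i j) * ((X : K[X]) * v j) + C (N i j) * v j) = 0 := by
    intro i
    have h1 := congrFun hvz i
    have h2 : ∑ j, (((X : K[X]) • M.map C + N.map C) i j) * v j = 0 := by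
      simpa [Matrix.mulVec, dotProduct] using h1
    refine Eq.trans (Finset.sum_congr rfl fun j _ => ?_) h2
    simp only [Matrix.add_apply, Matrix.smul_apply, Matrix.map_apply, smul_eq_mul]
    ring
  have key0 : ∀ i, ∑ j, N i j * c 0 j = 0 := by
    intro i
    have h3 := congrArg (fun q => Polynomial.coeff q 0) (hent i)
    simpa [Polynomial.finset_sum_coeff, Polynomial.coeff_add, Polynomial.coeff_C_mul,
      Polynomial.mul_coeff_zero, Polynomial.coeff_X_zero, hc] using h3
  have key : ∀ i d, (∑ j, M i j * c d j) + (∑ j, N i j * c (d + 1) j) = 0 := by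
    intro i d
    have h3 := congrArg (fun q => Polynomial.coeff q (d + 1)) (hent i)
    simpa [Polynomial.finset_sum_coeff, Polynomial.coeff_add, Polynomial.coeff_C_mul,
      Polynomial.coeff_X_mul, Finset.sum_add_distrib, hc] using h3
  have hrel0 : B (x 0) = 0 := by
    rw [← b.repr.map_eq_zero_iff]
    have h := LinearMap.toMatrix_mulVec_repr b b B (x 0)
    apply Finsupp.ext
    intro i
    have h4 : (LinearMap.toMatrix b b B *ᵥ ⇑(b.repr (x 0))) i = b.repr (B (x 0)) i := by
      rw [h]
    rw [← h4]
    rw [hreprx 0]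
    simpa [Matrix.mulVec, dotProduct, hN] using key0 i
  have hrel : ∀ d : ℕ, A (x d) + B (x (d + 1)) = 0 := by
    intro d
    rw [← b.repr.map_eq_zero_iff]
    apply Finsupp.ext
    intro i
    rw [map_add]
    have hA := LinearMap.toMatrix_mulVec_repr b b A (x d)
    have hB := LinearMap.toMatrix_mulVec_repr b b B (x (d + 1))
    have h4 : (LinearMap.toMatrix b b A *ᵥ ⇑(b.repr (x d))) i
        + (LinearMap.toMatrix b b B *ᵥ ⇑(b.repr (x (d + 1)))) i
        = b.repr (A (x d)) i + b.repr (B (x (d + 1))) i := by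
      rw [hA, hB]
    rw [Finsupp.add_apply, ← h4, hreprx d, hreprx (d + 1)]
    simpa [Matrix.mulVec, dotProduct, hM, hN] using key i d
  -- vanishing of high coefficients
  set D : ℕ := (Finset.univ.sup fun i => (v i).natDegree) + 1 with hD
  have hvanish : ∀ d, D ≤ d → x d = 0 := by
    intro d hd
    have hcd : c d = 0 := by
      funext i
      apply Polynomial.coeff_eq_zero_of_natDegree_lt
      have : (v i).natDegree ≤ Finset.univ.sup fun i => (v i).natDegree :=
        Finset.le_sup (f := fun i => (v i).natDegree) (Finset.mem_univ i)
      omega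
    rw [hx]; simp only [hcd]; exact map_zero _
  -- the compression space
  set U : Submodule K V := Submodule.span K (Set.range x) with hU
  set W : Submodule K V := U.map A with hW
  have hxU : ∀ d, x d ∈ U := fun d => Submodule.subset_span ⟨d, rfl⟩
  refine ⟨U, W, ?_, le_rfl, ?_⟩
  · -- finrank W < finrank U
    have hyex : ∃ y ∈ U, y ≠ 0 ∧ A y = 0 := by
      by_contra hcon
      push_neg at hcon
      have hinj : ∀ y ∈ U, A y = 0 → y = 0 := by
        intro y hy hAy
        by_contra hy0
        exact (hcon y hy hy0) hAy
      have hall : ∀ j d, D ≤ d + j → x d = 0 := by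
        intro j
        induction j with
        | zero => intro d hd; exact hvanish d (by omega)
        | succ j ih =>
          intro d hd
          have hx1 : x (d + 1) = 0 := ih (d + 1) (by omega)
          have : A (x d) = 0 := by
            have := hrel d
            rw [hx1, map_zero, add_zero] at this
            exact this
          exact hinj _ (hxU d) this
      have hxall : ∀ d, x d = 0 := fun d => hall D d (by omega)
      apply hv0
      funext i
      apply Polynomial.ext
      intro d
      have : c d = 0 := by
        have h := hreprx d
        rw [hxall d] at h
        simp only [map_zero] at h
        rw [← h]; rfl
      have := congrFun this i
      simpa [hc] using this
    obtain ⟨y, hyU, hy0, hAy⟩ := hyex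
    set f : U →ₗ[K] V := A.domRestrict U with hf
    have hrange : LinearMap.range f = W := by
      rw [hf, LinearMap.range_domRestrict]
    have hrk := LinearMap.finrank_range_add_finrank_ker f
    have hWrange : Module.finrank K W = Module.finrank K (LinearMap.range f) := by
      rw [hrange]
    have hkerpos : 0 < Module.finrank K (LinearMap.ker f) := by
      rw [Module.finrank_pos_iff]
      refine nontrivial_of_ne ⟨⟨y, hyU⟩, ?_⟩ 0 ?_
      · simp [hf, LinearMap.mem_ker, LinearMap.domRestrict_apply, hAy]
      · intro h
        apply hy0
        have h1 : (⟨y, hyU⟩ : U) = 0 := Subtype.ext_iff.mp h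
        exact Subtype.ext_iff.mp h1
    omega
  · -- U.map B ≤ W
    rw [hU, Submodule.map_span]
    apply Submodule.span_le.mpr
    rintro _ ⟨_, ⟨d, rfl⟩, rfl⟩
    cases d with
    | zero => rw [hrel0]; exact W.zero_mem
    | succ d =>
      have : B (x (d + 1)) = -(A (x d)) := eq_neg_of_add_eq_zero_right (hrel d)
      rw [this]
      exact W.neg_mem (Submodule.mem_map_of_mem (hxU d))
end

section
/- Let K be a field with |K| ≥ n, V an n-dimensional K-vector space, and A, B ∈ End(V) with det(sA + tB) = 0 for all s, t ∈ K. Then there exist d ≥ 0 and vectors u_0,...,u_d ∈ V with u_0 ≠ 0, such that A u_0 = 0, A u_{i+1} = -B u_i for 0 ≤ i < d, and B u_d = 0. -/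
open Polynomial Matrix

/-- The pencil determinant vanishes identically as a polynomial. -/
lemma aux_pencil_det_zero {K : Type*} [Field K] {n : ℕ}
    (hK : (n : Cardinal) ≤ Cardinal.mk K) (M N : Matrix (Fin n) (Fin n) K)
    (h : ∀ t : K, (M + t • N).det = 0) (hN : N.det = 0) :
    ((X : K[X]) • N.map C + M.map C).det = 0 := by
  classical
  set p : K[X] := ((X : K[X]) • N.map C + M.map C).det with hp
  have heval : ∀ t : K, p.eval t = (M + t • N).det := by
    intro t
    have h1 : (evalRingHom t) (((X : K[X]) • N.map C + M.map C).det)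
        = ((((X : K[X]) • N.map C + M.map C)).map (evalRingHom t)).det :=
      RingHom.map_det _ _
    have h2 : (((X : K[X]) • N.map C + M.map C)).map ⇑(evalRingHom t) = M + t • N := by
      ext i j
      simp only [Matrix.map_apply, Matrix.add_apply, Matrix.smul_apply, smul_eq_mul,
        coe_evalRingHom, eval_add, eval_mul, eval_X, eval_C]
      ring
    rw [h2] at h1
    exact h1
  have hdeg : p.natDegree ≤ n := by
    simpa using Polynomial.natDegree_det_X_add_C_le N M
  have hcoeff : p.coeff n = 0 := by
    have := Polynomial.coeff_det_X_add_C_card N M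
    simpa [hN] using this
  by_contra hp0
  have hlt : p.natDegree < n := by
    rcases lt_or_eq_of_le hdeg with h' | h'
    · exact h'
    · exact absurd (by rw [← h'] at hcoeff; exact leadingCoeff_eq_zero.mp hcoeff) hp0
  obtain ⟨s, hs⟩ := Cardinal.exists_finset_le_card K n hK
  have hsub : s ⊆ p.roots.toFinset := by
    intro x _
    rw [Multiset.mem_toFinset, Polynomial.mem_roots hp0]
    exact (heval x).trans (h x)
  have : n ≤ p.natDegree :=
    hs.trans ((Finset.card_le_card hsub).trans
      ((Multiset.toFinset_card_le _).trans (Polynomial.card_roots' p)))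
  omega

/-- Kronecker-Weierstrass style chain of vectors for a singular pencil. -/
theorem stmt4 {K V : Type*} [Field K] [AddCommGroup V] [Module K V]
    [FiniteDimensional K V] (n : ℕ) (hV : Module.finrank K V = n)
    (hK : (n : Cardinal) ≤ Cardinal.mk K)
    (A B : V →ₗ[K] V)
    (hdet : ∀ s t : K, LinearMap.det (s • A + t • B) = 0) :
    ∃ (d : ℕ) (u : Fin (d + 1) → V), u 0 ≠ 0 ∧ A (u 0) = 0 ∧
      (∀ i : Fin d, A (u i.succ) = - B (u i.castSucc)) ∧
      B (u (Fin.last d)) = 0 := by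
  classical
  let b : Module.Basis (Fin n) K V := Module.finBasisOfFinrankEq K V hV
  set M := LinearMap.toMatrix b b A with hMdef
  set N := LinearMap.toMatrix b b B with hNdef
  have hdetM : ∀ s t : K, (s • M + t • N).det = 0 := by
    intro s t
    have heq : s • M + t • N = LinearMap.toMatrix b b (s • A + t • B) := by
      simp only [hMdef, hNdef, map_add, LinearEquiv.map_smul]
    rw [heq, LinearMap.det_toMatrix]
    exact hdet s t
  have hNdet : N.det = 0 := by simpa using hdetM 0 1
  have hpencil : ∀ t : K, (M + t • N).det = 0 := by
    intro t; simpa using hdetM 1 t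
  have hdet0 : ((X : K[X]) • N.map C + M.map C).det = 0 :=
    aux_pencil_det_zero hK M N hpencil hNdet
  obtain ⟨v, hv0, hv⟩ := Matrix.exists_mulVec_eq_zero_iff.mpr hdet0
  -- coefficient vectors
  set u : ℕ → Fin n → K := fun m i => (v i).coeff m with hu
  have hv' : ∀ i : Fin n, ∑ j, (X * C (N i j) + C (M i j)) * v j = 0 := by
    intro i
    have := congrFun hv i
    simpa [Matrix.mulVec, dotProduct, Matrix.add_apply, Matrix.smul_apply,
      Matrix.map_apply, smul_eq_mul] using this
  have h0 : M.mulVec (u 0) = 0 := by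
    funext i
    have := congrArg (fun q => q.coeff 0) (hv' i)
    simpa [Polynomial.finset_sum_coeff, Polynomial.mul_coeff_zero,
      Matrix.mulVec, dotProduct, hu] using this
  have hrec : ∀ m : ℕ, M.mulVec (u (m + 1)) + N.mulVec (u m) = 0 := by
    intro m
    funext i
    have := congrArg (fun q => q.coeff (m + 1)) (hv' i)
    simp only [Polynomial.finset_sum_coeff, add_mul, Polynomial.coeff_add,
      mul_assoc, Polynomial.coeff_X_mul, Polynomial.coeff_C_mul,
      Polynomial.coeff_zero, Finset.sum_add_distrib] at this
    simpa [Matrix.mulVec, dotProduct, hu, add_comm] using this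
  have hex : ∃ m, u m ≠ 0 := by
    obtain ⟨i, hi⟩ : ∃ i, v i ≠ 0 := by
      by_contra hcon; push_neg at hcon; exact hv0 (funext hcon)
    have hall : ¬ ∀ m, (v i).coeff m = 0 := fun hc =>
      hi (Polynomial.ext fun m => by simp [hc])
    push_neg at hall
    obtain ⟨m, hm⟩ := hall
    exact ⟨m, fun hzz => hm (by simpa [hu] using congrFun hzz i)⟩
  set k := Nat.find hex with hk
  have hk0 : u k ≠ 0 := Nat.find_spec hex
  have hmin : ∀ m, m < k → u m = 0 := by
    intro m hm
    have := Nat.find_min hex hm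
    simpa using this
  set D := Finset.univ.sup (fun i : Fin n => (v i).natDegree) with hD
  have hDz : ∀ m, D < m → u m = 0 := by
    intro m hm
    funext i
    exact Polynomial.coeff_eq_zero_of_natDegree_lt
      (lt_of_le_of_lt
        (Finset.le_sup (f := fun i : Fin n => (v i).natDegree) (Finset.mem_univ i)) hm)
  have hkD : k ≤ D := by
    obtain ⟨i, hi⟩ : ∃ i, (v i).coeff k ≠ 0 := by
      by_contra hcon; push_neg at hcon; exact hk0 (funext hcon)
    exact (Polynomial.le_natDegree_of_ne_zero hi).trans
      (Finset.le_sup (f := fun i : Fin n => (v i).natDegree) (Finset.mem_univ i))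
  -- transfer back to V
  set e := b.equivFun with he
  have hAe : ∀ x : Fin n → K, A (e.symm x) = e.symm (M.mulVec x) := by
    intro x
    have h1 : e (A (e.symm x)) = M.mulVec (e (e.symm x)) := by
      simp only [he, Module.Basis.equivFun_apply]
      exact (LinearMap.toMatrix_mulVec_repr b b A (e.symm x)).symm
    rw [e.apply_symm_apply] at h1
    calc A (e.symm x) = e.symm (e (A (e.symm x))) := (e.symm_apply_apply _).symm
    _ = e.symm (M.mulVec x) := by rw [h1]
  have hBe : ∀ x : Fin n → K, B (e.symm x) = e.symm (N.mulVec x) := by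
    intro x
    have h1 : e (B (e.symm x)) = N.mulVec (e (e.symm x)) := by
      simp only [he, Module.Basis.equivFun_apply]
      exact (LinearMap.toMatrix_mulVec_repr b b B (e.symm x)).symm
    rw [e.apply_symm_apply] at h1
    calc B (e.symm x) = e.symm (e (B (e.symm x))) := (e.symm_apply_apply _).symm
    _ = e.symm (N.mulVec x) := by rw [h1]
  refine ⟨D - k, fun j => e.symm (u (k + j.val)), ?_, ?_, ?_, ?_⟩
  · -- nonzero
    intro hzz
    apply hk0
    have := congrArg e hzz
    simpa using this
  · -- A (u 0) = 0
    have hMk : M.mulVec (u k) = 0 := by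
      rcases Nat.eq_zero_or_pos k with hk1 | hk1
      · rw [hk1]; exact h0
      · have h1 := hrec (k - 1)
        rw [Nat.sub_add_cancel hk1, hmin (k - 1) (by omega)] at h1
        simpa using h1
    simp only [Fin.val_zero, Nat.add_zero, hAe, hMk, map_zero]
  · -- chain
    intro i
    have h1 := hrec (k + i.val)
    have h2 : M.mulVec (u (k + i.val + 1)) = -(N.mulVec (u (k + i.val))) :=
      eq_neg_of_add_eq_zero_left h1
    simp only [Fin.val_succ, Fin.coe_castSucc, hAe, hBe, ← Nat.add_assoc, h2, map_neg]
  · -- B (u last) = 0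
    have hlast : k + (D - k) = D := Nat.add_sub_cancel' hkD
    have h1 := hrec D
    rw [hDz (D + 1) (Nat.lt_succ_self D)] at h1
    have h2 : N.mulVec (u D) = 0 := by simpa using h1
    simp only [Fin.val_last, hlast, hBe, h2, map_zero]
end

section
/- Let K be a field with at least 3 elements and n ≥ 3 odd. The space of skew-symmetric n×n matrices over K is a maximal singular subspace of M_n(K): every matrix space properly containing it contains an invertible matrix. -/
/-! If `A` is not alternating then `vᵀ A v ≠ 0` for some `v`. Congruences `A ↦ Pᵀ A P`
preserve the alternating matrices, hence the property that `A + N` is invertible for some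
alternating `N`, so we may assume `A₀₀ ≠ 0`; as `|K| ≥ 3`, a second congruence makes `A₁₁ ≠ 0`
too, since `a s² + b s + c` with `a ≠ 0` cannot vanish at three points. An alternating matrix
clears the first column below the corner, giving `det (A + N) = A₀₀ · det (A' + N')` for the
lower-right block `A'`, which is again not alternating because `A'₀₀ = A₁₁`; induct on the size.
Finally, a space strictly containing the alternating matrices contains a non-alternating `A` and
then the invertible `A + N`. -/

namespace Matrix

variable {R : Type*} [CommRing R] {m n : Type*}

def IsAlt (A : Matrix n n R) : Prop :=
  Aᵀ = -A ∧ ∀ i, A i i = 0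

theorem IsAlt.apply_swap {A : Matrix n n R} (hA : A.IsAlt) (i j : n) : A j i = -A i j :=
  congrFun (congrFun hA.1 i) j

theorem IsAlt.dotProduct_mulVec_self [Fintype n] {A : Matrix n n R} (hA : A.IsAlt) (v : n → R) :
    v ⬝ᵥ A *ᵥ v = 0 := by
  simp only [dotProduct, mulVec, Finset.mul_sum, ← Finset.sum_product']
  refine Finset.sum_ninvolution Prod.swap (fun ⟨i, j⟩ => ?_) (fun ⟨i, j⟩ hne heq => ?_)
    (fun _ => Finset.mem_univ _) Prod.swap_swap
  · simp only [Prod.swap_prod_mk, hA.apply_swap i j]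
    ring
  · obtain rfl : i = j := (Prod.ext_iff.mp heq).2
    simp [hA.2] at hne

theorem isAlt_of_forall_dotProduct_mulVec_self [Fintype n] [DecidableEq n] {A : Matrix n n R}
    (hA : ∀ v, v ⬝ᵥ A *ᵥ v = 0) : A.IsAlt := by
  have hdiag : ∀ i, A i i = 0 := fun i => by
    simpa [mulVec_single, single_dotProduct] using hA (Pi.single i 1)
  refine ⟨?_, hdiag⟩
  ext i j
  have := hA (Pi.single i 1 + Pi.single j 1)
  simp only [mulVec_add, mulVec_single, MulOpposite.op_one, one_smul, dotProduct_add,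
    add_dotProduct, single_dotProduct, col_apply, hdiag, mul_zero, one_mul, zero_add,
    add_zero] at this
  simp only [transpose_apply, neg_apply]
  linear_combination this

theorem isAlt_iff_forall_dotProduct_mulVec_self [Fintype n] [DecidableEq n] {A : Matrix n n R} :
    A.IsAlt ↔ ∀ v, v ⬝ᵥ A *ᵥ v = 0 :=
  ⟨IsAlt.dotProduct_mulVec_self, isAlt_of_forall_dotProduct_mulVec_self⟩

theorem isAlt_of_isEmpty [IsEmpty n] (A : Matrix n n R) : A.IsAlt :=
  ⟨Subsingleton.elim _ _, isEmptyElim⟩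

theorem IsAlt.add {A B : Matrix n n R} (hA : A.IsAlt) (hB : B.IsAlt) : (A + B).IsAlt :=
  ⟨by rw [transpose_add, hA.1, hB.1, neg_add], fun i => by simp [hA.2 i, hB.2 i]⟩

theorem IsAlt.transpose_mul_mul [Fintype m] [Fintype n] [DecidableEq m] {N : Matrix n n R}
    (hN : N.IsAlt) (P : Matrix n m R) : (Pᵀ * N * P).IsAlt :=
  isAlt_of_forall_dotProduct_mulVec_self fun v => by
    rw [← mulVec_mulVec, ← mulVec_mulVec, mulVec_transpose, dotProduct_comm, ← dotProduct_mulVec,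
      dotProduct_comm]
    exact hN.dotProduct_mulVec_self _

theorem isAlt_vecMulVec_sub_vecMulVec (u w : n → R) :
    (vecMulVec u w - vecMulVec w u).IsAlt :=
  ⟨by rw [transpose_sub, transpose_vecMulVec, transpose_vecMulVec, neg_sub],
    fun i => by simp [vecMulVec_apply, mul_comm]⟩

theorem det_one_updateCol [Fintype n] [DecidableEq n] (k : n) (v : n → R) :
    ((1 : Matrix n n R).updateCol k v).det = v k := by
  rw [← cramer_apply, cramer_one]
  rfl

theorem transpose_mul_mul_apply [Fintype m] [Fintype n] (P : Matrix n m R) (A : Matrix n n R)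
    (i j : m) : (Pᵀ * A * P) i j = Pᵀ i ⬝ᵥ A *ᵥ Pᵀ j := by
  rw [Matrix.mul_assoc, mul_apply, dotProduct]
  rfl

theorem det_eq_mul_det_submatrix_succ_of_apply_zero {k : ℕ}
    {M : Matrix (Fin (k + 1)) (Fin (k + 1)) R} (hM : ∀ i ≠ 0, M i 0 = 0) :
    M.det = M 0 0 * (M.submatrix Fin.succ Fin.succ).det := by
  rw [det_succ_column_zero,
    Fintype.sum_eq_single 0 fun i hi => by rw [hM i hi, mul_zero, zero_mul]]
  simp

theorem exists_isAlt_isUnit_add_of_transpose_mul_mul [Fintype n] [DecidableEq n]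
    {A P : Matrix n n R} (hP : IsUnit P) (h : ∃ N, N.IsAlt ∧ IsUnit (Pᵀ * A * P + N)) :
    ∃ N, N.IsAlt ∧ IsUnit (A + N) := by
  obtain ⟨N, hN, hU⟩ := h
  obtain ⟨u, rfl⟩ := hP
  set P : Matrix n n R := ↑u
  set Q : Matrix n n R := ↑u⁻¹
  have hPQ : P * Q = 1 := u.mul_inv
  have hQP : Qᵀ * Pᵀ = 1 := by rw [← transpose_mul, hPQ, transpose_one]
  refine ⟨Qᵀ * N * Q, hN.transpose_mul_mul Q, ?_⟩
  have hconj : A + Qᵀ * N * Q = Qᵀ * (Pᵀ * A * P + N) * Q :=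
    calc A + Qᵀ * N * Q = (Qᵀ * Pᵀ) * A * (P * Q) + Qᵀ * N * Q := by
          rw [hQP, hPQ, one_mul, mul_one]
      _ = _ := by noncomm_ring
  rw [hconj]
  exact ((isUnit_transpose Q).mpr u⁻¹.isUnit |>.mul hU).mul u⁻¹.isUnit

theorem exists_isAlt_isUnit_add_of_submatrix_succ_succ {k : ℕ}
    {A : Matrix (Fin (k + 1)) (Fin (k + 1)) R} (hA : IsUnit (A 0 0))
    {N' : Matrix (Fin k) (Fin k) R} (hN' : N'.IsAlt)
    (hU : IsUnit (A.submatrix Fin.succ Fin.succ + N')) : ∃ N, N.IsAlt ∧ IsUnit (A + N) := by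
  set c : Fin (k + 1) → R := Function.update (Aᵀ 0) 0 0
  set N₁ := vecMulVec (Pi.single 0 1) c - vecMulVec c (Pi.single 0 1)
  set N₂ : Matrix (Fin (k + 1)) (Fin (k + 1)) R := of (Fin.cons 0 fun i => Fin.cons 0 (N' i))
  have hN₂ : N₂.IsAlt := by
    refine ⟨?_, fun i => Fin.cases rfl hN'.2 i⟩
    ext i j
    cases i using Fin.cases <;> cases j using Fin.cases <;>
      simp only [transpose_apply, of_apply, Fin.cons_zero, Fin.cons_succ, Pi.zero_apply, neg_apply,
        neg_zero, N₂]
    exact hN'.apply_swap _ _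
  refine ⟨N₁ + N₂, (isAlt_vecMulVec_sub_vecMulVec _ _).add hN₂, ?_⟩
  have hcol : ∀ i ≠ 0, (A + (N₁ + N₂)) i 0 = 0 := fun i hi => by
    obtain ⟨i, rfl⟩ := Fin.exists_succ_eq.mpr hi
    simp [N₁, N₂, c, vecMulVec_apply]
  have hcorner : (A + (N₁ + N₂)) 0 0 = A 0 0 := by simp [N₁, N₂, c, vecMulVec_apply]
  have hblock :
      (A + (N₁ + N₂)).submatrix Fin.succ Fin.succ = A.submatrix Fin.succ Fin.succ + N' := by
    ext i j
    simp [N₁, N₂, c, vecMulVec_apply]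
  rw [isUnit_iff_isUnit_det, det_eq_mul_det_submatrix_succ_of_apply_zero hcol, hcorner, hblock]
  exact hA.mul ((isUnit_iff_isUnit_det _).mp hU)

section Field

variable {K : Type*} [Field K]

theorem exists_quadratic_ne_zero (hK : 3 ≤ Cardinal.mk K) {a : K} (ha : a ≠ 0) (b c : K) :
    ∃ s, a * s ^ 2 + b * s + c ≠ 0 := by
  obtain ⟨t, ht0, ht1⟩ := Cardinal.exists_ne_ne_of_three_le hK 0 1
  by_contra! h
  have : a * t * (t - 1) = 0 := by linear_combination h t - t * h 1 - (1 - t) * h 0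
  exact mul_ne_zero (mul_ne_zero ha ht0) (sub_ne_zero.mpr ht1) this

theorem exists_isUnit_transpose_apply_eq [Fintype n] [DecidableEq n] {v : n → K} (hv : v ≠ 0)
    (i : n) : ∃ P : Matrix n n K, IsUnit P ∧ Pᵀ i = v := by
  obtain ⟨k, hk⟩ := Function.ne_iff.mp hv
  refine ⟨((1 : Matrix n n K).updateCol k v).submatrix id (Equiv.swap i k), ?_, ?_⟩
  · rw [isUnit_iff_isUnit_det, det_permute', det_one_updateCol]
    exact ((Units.isUnit _).map (Int.castRingHom K)).mul (isUnit_iff_ne_zero.mpr hk)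
  · ext r
    simp

theorem exists_isUnit_transpose_mul_mul_apply_self_ne_zero [Fintype n] [DecidableEq n]
    {A : Matrix n n K} (hA : ¬ A.IsAlt) (i : n) :
    ∃ P : Matrix n n K, IsUnit P ∧ (Pᵀ * A * P) i i ≠ 0 := by
  obtain ⟨v, hv⟩ : ∃ v, v ⬝ᵥ A *ᵥ v ≠ 0 := by
    simpa [isAlt_iff_forall_dotProduct_mulVec_self] using hA
  have hv0 : v ≠ 0 := by
    rintro rfl
    simp at hv
  obtain ⟨P, hP, hPv⟩ := exists_isUnit_transpose_apply_eq hv0 i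
  exact ⟨P, hP, by rwa [transpose_mul_mul_apply, hPv]⟩

theorem exists_isUnit_transpose_mul_mul_apply_self_ne_zero₂ (hK : 3 ≤ Cardinal.mk K)
    [Fintype n] [DecidableEq n] {A : Matrix n n K} (hA : ¬ A.IsAlt) {i j : n} (hij : i ≠ j) :
    ∃ P : Matrix n n K, IsUnit P ∧ (Pᵀ * A * P) i i ≠ 0 ∧ (Pᵀ * A * P) j j ≠ 0 := by
  obtain ⟨P, hP, hPi⟩ := exists_isUnit_transpose_mul_mul_apply_self_ne_zero hA i
  set D := Pᵀ * A * P
  obtain ⟨s, hs⟩ := exists_quadratic_ne_zero hK hPi (D i j + D j i) (D j j)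
  set u : n → K := Pi.single i s + Pi.single j 1
  set Q := (1 : Matrix n n K).updateCol j u
  have hQi : Qᵀ i = Pi.single i 1 := by
    ext r
    simp [Q, updateCol_ne hij, one_apply, Pi.single_apply, eq_comm]
  have hQj : Qᵀ j = u := by
    ext r
    simp [Q]
  have hPQ : (P * Q)ᵀ * A * (P * Q) = Qᵀ * D * Q := by
    simp only [D, transpose_mul, Matrix.mul_assoc]
  refine ⟨P * Q, hP.mul ?_, ?_, ?_⟩
  · rw [isUnit_iff_isUnit_det, det_one_updateCol]
    simp [u, hij]
  · rwa [hPQ, transpose_mul_mul_apply, hQi, mulVec_single_one, single_one_dotProduct]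
  · rw [hPQ, transpose_mul_mul_apply, hQj]
    convert hs using 1
    simp only [u, mulVec_add, mulVec_single, op_smul_eq_smul, MulOpposite.op_one, one_smul,
      dotProduct_add, dotProduct_smul, add_dotProduct, single_dotProduct, col_apply, one_mul,
      smul_eq_mul]
    ring

theorem exists_isAlt_isUnit_add_of_not_isAlt (hK : 3 ≤ Cardinal.mk K) :
    ∀ {m : ℕ} {A : Matrix (Fin m) (Fin m) K}, ¬ A.IsAlt → ∃ N, N.IsAlt ∧ IsUnit (A + N)
  | 0, A, hA => absurd (isAlt_of_isEmpty A) hA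
  | 1, A, hA => by
    obtain ⟨P, hP, hP0⟩ := exists_isUnit_transpose_mul_mul_apply_self_ne_zero hA 0
    exact exists_isAlt_isUnit_add_of_transpose_mul_mul hP <|
      exists_isAlt_isUnit_add_of_submatrix_succ_succ (isUnit_iff_ne_zero.mpr hP0)
        (isAlt_of_isEmpty 0) (isUnit_of_subsingleton _)
  | k + 2, A, hA => by
    obtain ⟨P, hP, hP0, hP1⟩ :=
      exists_isUnit_transpose_mul_mul_apply_self_ne_zero₂ hK hA (i := 0) (j := 1) zero_ne_one
    obtain ⟨N', hN', hU⟩ := exists_isAlt_isUnit_add_of_not_isAlt hK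
      (A := (Pᵀ * A * P).submatrix Fin.succ Fin.succ) fun h => hP1 (by simpa using h.2 0)
    exact exists_isAlt_isUnit_add_of_transpose_mul_mul hP <|
      exists_isAlt_isUnit_add_of_submatrix_succ_succ (isUnit_iff_ne_zero.mpr hP0) hN' hU

end Field

end Matrix

theorem stmt7_general {K : Type*} [Field K] (hK : (3 : Cardinal) ≤ Cardinal.mk K)
    {n : ℕ}
    (S : Submodule K (Matrix (Fin n) (Fin n) K))
    (hS : ∀ A : Matrix (Fin n) (Fin n) K,
      A ∈ S ↔ (A.transpose = -A ∧ ∀ i, A i i = 0))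
    (B : Submodule K (Matrix (Fin n) (Fin n) K)) (hSB : S < B) :
    ∃ M ∈ B, IsUnit M := by
  obtain ⟨A, hAB, hAS⟩ := SetLike.exists_of_lt hSB
  obtain ⟨N, hN, hU⟩ := Matrix.exists_isAlt_isUnit_add_of_not_isAlt hK ((hS A).not.mp hAS)
  exact ⟨A + N, B.add_mem hAB (hSB.le ((hS N).mpr hN)), hU⟩

/-- For `|K| ≥ 3` and odd `n ≥ 3`, the space of skew-symmetric `n × n` matrices
is a maximal singular subspace: any strictly larger matrix space contains an
invertible matrix. -/
theorem stmt7 {K : Type*} [Field K] (hK : (3 : Cardinal) ≤ Cardinal.mk K)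
    {n : ℕ} (hn : 3 ≤ n) (hodd : Odd n)
    (S : Submodule K (Matrix (Fin n) (Fin n) K))
    (hS : ∀ A : Matrix (Fin n) (Fin n) K,
      A ∈ S ↔ (A.transpose = -A ∧ ∀ i, A i i = 0))
    (B : Submodule K (Matrix (Fin n) (Fin n) K)) (hSB : S < B) :
    ∃ M ∈ B, IsUnit M :=
  stmt7_general hK S hS B hSB
end

section
/- For every integer e > 0 and d with 2e ≤ d ≤ 3e, the polynomial P_{d,e}(α,β,γ) = Σ_{a+b+c=d} (d!/(a! b! c!)) · C(e,a) C(e,b) C(e,c) α^a β^b γ^c in ℤ[α,β,γ] is not divisible by α + β + γ. -/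
open MvPolynomial in
/-- The polynomial `P_{d,e}` of the paper. -/
noncomputable def Ppoly (d e : ℕ) : MvPolynomial (Fin 3) ℤ :=
  ∑ a ∈ Finset.range (d + 1), ∑ b ∈ Finset.range (d + 1 - a),
    MvPolynomial.C ((d.factorial / (a.factorial * b.factorial * (d - a - b).factorial) *
        e.choose a * e.choose b * e.choose (d - a - b) : ℤ)) *
      (X 0 ^ a * X 1 ^ b * X 2 ^ (d - a - b))

/-!
Substituting `α ↦ x`, `β ↦ 1`, `γ ↦ -x - 1` kills `α + β + γ`, so it would kill `P_{d,e}`.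
Write `d = m + 2e` with `m ≤ e`. The monomial `α^a β^b γ^c` becomes `(-1)^c x^a (x + 1)^c`, which
only reaches `x^m` when `a ≤ m`; the factor `C(e,b) C(e,c)` then vanishes unless `b = c = e`, since
`b + c = d - a ≥ 2e`. Hence the coefficient of `x^m` after the substitution is
`±(d! / (m! e! e!)) C(e,m) ≠ 0`.
-/

open MvPolynomial Nat

noncomputable abbrev sumZeroSubst (R : Type*) [CommRing R] :
    MvPolynomial (Fin 3) R →ₐ[R] Polynomial R :=
  aeval ![Polynomial.X, 1, -Polynomial.X - 1]

lemma sumZeroSubst_X_add_X_add_X {R : Type*} [CommRing R] :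
    sumZeroSubst R
      (X 0 + X 1 + X 2 : MvPolynomial (Fin 3) R) = 0 := by
  simp only [map_add, aeval_X, Matrix.cons_val_zero, Matrix.cons_val_one, Matrix.head_cons,
    Matrix.cons_val_two, Matrix.tail_cons]
  ring

lemma coeff_sumZeroSubst_C_mul_monomial {R : Type*} [CommRing R] (k : R) (a b c m : ℕ) :
    (sumZeroSubst R
        (C k * (X 0 ^ a * X 1 ^ b * X 2 ^ c))).coeff m
      = k * (-1) ^ c * (if a ≤ m then (c.choose (m - a) : R) else 0) := by
  have hsubst : sumZeroSubst R
        (C k * (X 0 ^ a * X 1 ^ b * X 2 ^ c))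
      = Polynomial.C (k * (-1) ^ c) * ((Polynomial.X + 1) ^ c * Polynomial.X ^ a) := by
    simp only [map_mul, map_pow, aeval_C, aeval_X, Matrix.cons_val_zero, Matrix.cons_val_one,
      Matrix.head_cons, Matrix.cons_val_two, Matrix.tail_cons, one_pow, Polynomial.algebraMap_eq,
      map_neg, map_one]
    rw [show (-Polynomial.X - 1 : Polynomial R) = -(Polynomial.X + 1) by ring, neg_pow]
    ring
  rw [hsubst, Polynomial.coeff_C_mul, Polynomial.coeff_mul_X_pow']
  split_ifs
  · rw [Polynomial.coeff_X_add_one_pow]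
  · rw [mul_zero]

lemma choose_eq_zero_or_choose_eq_zero {a b m e : ℕ} (ha : a ≤ m) (hab : (a, b) ≠ (m, e)) :
    e.choose b = 0 ∨ e.choose (m + 2 * e - a - b) = 0 := by
  rw [Nat.choose_eq_zero_iff, Nat.choose_eq_zero_iff]
  by_contra! h
  exact hab (Prod.ext (by omega) (by omega))

lemma coeff_sumZeroSubst_Ppoly (m e : ℕ) :
    (sumZeroSubst ℤ (Ppoly (m + 2 * e) e)).coeff m
      = ((m + 2 * e)! / (m ! * e ! * e !) : ℤ) * e.choose m * (-1) ^ e := by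
  simp only [Ppoly, map_sum, Polynomial.finsetSum_coeff, coeff_sumZeroSubst_C_mul_monomial]
  rw [Finset.sum_eq_single_of_mem m (by simp only [Finset.mem_range]; omega)]
  · rw [Finset.sum_eq_single_of_mem e (by simp only [Finset.mem_range]; omega)]
    · simp only [show m + 2 * e - m - e = e by omega, le_refl, if_true, Nat.sub_self,
        Nat.choose_zero_right, Nat.choose_self, Nat.cast_one]
      ring
    · intro b _ hb
      have h := choose_eq_zero_or_choose_eq_zero (m := m) le_rfl (by simpa using hb)
      rw [Nat.add_sub_cancel_left] at h
      rcases h with h | h <;> simp [h]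
  · intro a _ ha
    refine Finset.sum_eq_zero fun b _ => ?_
    by_cases ham : a ≤ m
    · rcases choose_eq_zero_or_choose_eq_zero (b := b) (e := e) ham (by simp [ha]) with h | h <;>
        simp [h]
    · simp [ham]

lemma factorial_div_factorial_mul_factorial_mul_factorial_ne_zero (m e : ℕ) :
    ((m + 2 * e)! / (m ! * e ! * e !) : ℤ) ≠ 0 := by
  have hdvd : m ! * e ! * e ! ∣ (m + 2 * e)! := by
    rw [mul_assoc, two_mul]
    exact (mul_dvd_mul_left _ (factorial_mul_factorial_dvd_factorial_add e e)).trans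
      (factorial_mul_factorial_dvd_factorial_add m (e + e))
  intro h
  have := Int.ediv_mul_cancel (Int.natCast_dvd_natCast.mpr hdvd)
  push_cast at this
  rw [h, zero_mul] at this
  exact factorial_ne_zero _ (by exact_mod_cast this.symm)

open MvPolynomial in
theorem stmt12_general (e d : ℕ) (hd1 : 2 * e ≤ d) (hd2 : d ≤ 3 * e) :
    ¬ ((X 0 + X 1 + X 2 : MvPolynomial (Fin 3) ℤ) ∣ Ppoly d e) := by
  rintro ⟨Q, hQ⟩
  obtain ⟨m, rfl⟩ : ∃ m, d = m + 2 * e := ⟨d - 2 * e, by omega⟩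
  have hcoeff := coeff_sumZeroSubst_Ppoly m e
  rw [hQ, map_mul, sumZeroSubst_X_add_X_add_X, zero_mul, Polynomial.coeff_zero] at hcoeff
  have hm : m ≤ e := by omega
  exact mul_ne_zero (mul_ne_zero (factorial_div_factorial_mul_factorial_mul_factorial_ne_zero m e)
    (by exact_mod_cast (Nat.choose_pos hm).ne')) (pow_ne_zero _ (by norm_num)) hcoeff.symm

open MvPolynomial in
/-- For `e > 0` and `2e ≤ d ≤ 3e`, `P_{d,e}` is not divisible by `α + β + γ`. -/
theorem stmt12 (e d : ℕ) (he : 0 < e) (hd1 : 2 * e ≤ d) (hd2 : d ≤ 3 * e) :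
    ¬ ((X 0 + X 1 + X 2 : MvPolynomial (Fin 3) ℤ) ∣ Ppoly d e) :=
  stmt12_general e d hd1 hd2
end

section
/- For every integer e ≥ 1 and 1 ≤ k ≤ e, the sum Q_{2k-1} = (e+1)·2k · Σ_{a=0}^{2k-1} C(2k-1,a) C(e,a) C(e,2k-1-a) (−1)^a · a/(a+1) equals (−1)^k · (e+k)(e+k−1)···(e−k+1) / (k·((k−1)!)²), and in particular is nonzero. -/
namespace Stmt14Aux

noncomputable def ch (n : ℕ) (z : ℤ) : ℚ := if 0 ≤ z then (n.choose z.toNat : ℚ) else 0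

lemma ch_neg {n : ℕ} {z : ℤ} (h : z < 0) : ch n z = 0 := by
  simp [ch, not_le.mpr h]

lemma ch_ofNat (n m : ℕ) : ch n (m : ℤ) = (n.choose m : ℚ) := by
  simp [ch]

lemma chC (n : ℕ) (z : ℤ) : ((z : ℚ) + 1) * ch n (z + 1) = ((n : ℚ) - (z : ℚ)) * ch n z := by
  rcases lt_trichotomy z (-1) with h | h | h
  · rw [ch_neg (show z + 1 < 0 by omega), ch_neg (show z < 0 by omega)]; ring
  · subst h
    rw [ch_neg (show (-1 : ℤ) < 0 by norm_num)]
    push_cast; ring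
  · have hz : 0 ≤ z := by omega
    obtain ⟨m, rfl⟩ := Int.eq_ofNat_of_zero_le hz
    rw [show ((m : ℤ) + 1) = ((m + 1 : ℕ) : ℤ) by push_cast; ring, ch_ofNat, ch_ofNat]
    rcases le_or_gt (m : ℕ) n with hm | hm
    · have h := congrArg (fun x : ℕ => (x : ℚ)) (Nat.choose_succ_right_eq n m)
      push_cast [Nat.cast_sub hm] at h
      push_cast
      linarith
    · rw [Nat.choose_eq_zero_of_lt hm, Nat.choose_eq_zero_of_lt (by omega)]
      simp

lemma chB (N : ℕ) (z : ℤ) : ((N : ℚ) + 1) * ch N (z - 1) = (z : ℚ) * ch (N + 1) z := by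
  rcases lt_trichotomy z 0 with h | h | h
  · rw [ch_neg (by omega), ch_neg (by omega)]; ring
  · subst h; rw [ch_neg (by omega)]; push_cast; ring
  · obtain ⟨m, rfl⟩ := Int.eq_ofNat_of_zero_le (le_of_lt h)
    have hm : 1 ≤ m := by exact_mod_cast h
    obtain ⟨m', rfl⟩ := Nat.exists_eq_add_of_le hm
    rw [show ((1 + m' : ℕ) : ℤ) - 1 = (m' : ℤ) by push_cast; ring, ch_ofNat, ch_ofNat]
    have h := congrArg (fun x : ℕ => (x : ℚ)) (Nat.add_one_mul_choose_eq N m')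
    push_cast at h
    rw [show (1 + m' : ℕ) = m' + 1 by ring]
    push_cast
    linarith

lemma chA (N : ℕ) (z : ℤ) : ((N : ℚ) + 1) * ch N z = ((N : ℚ) + 1 - (z : ℚ)) * ch (N + 1) z := by
  have h1 := chB N (z + 1)
  have h2 := chC (N + 1) z
  rw [show z + 1 - 1 = z by ring] at h1
  push_cast at h1 h2 ⊢
  rw [h1]
  linarith

noncomputable def t (a b c : ℕ) (j : ℤ) : ℚ :=
  (-1 : ℚ) ^ j * ch (a + b) ((a : ℤ) + j) * ch (b + c) ((b : ℤ) + j - 1) * ch (c + a) ((c : ℤ) + j)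

lemma pointwise (A B C : ℕ) (j : ℤ) :
    ((A : ℚ) + B + 2) * ((B : ℚ) + C + 2) * ((C : ℚ) + A + 2) *
      (t (A+1) (B+1) (C+1) j - t A (B+1) (C+1) j - t (A+1) B (C+1) j - t (A+1) (B+1) C j)
    = (-(((j : ℚ) + 1 + A + 1) * ((j : ℚ) + 1 + B) * ((j : ℚ) + 1 + C + 1))) * t (A+1) (B+1) (C+1) (j+1)
      - (-(((j : ℚ) + A + 1) * ((j : ℚ) + B) * ((j : ℚ) + C + 1))) * t (A+1) (B+1) (C+1) j := by
  have b1 : ((A:ℚ)+(B:ℚ)+2) * ch (A+(B+1)) ((A:ℤ)+j) = ((A:ℚ)+1+(j:ℚ)) * ch (A+1+(B+1)) ((A:ℤ)+1+j) := by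
    have h := chB (A+(B+1)) ((A:ℤ)+1+j)
    rw [show (A:ℤ)+1+j-1 = (A:ℤ)+j by ring] at h
    rw [show A+(B+1)+1 = A+1+(B+1) by omega] at h
    push_cast at h ⊢; linear_combination h
  have a1 : ((C:ℚ)+(A:ℚ)+2) * ch (C+1+A) ((C:ℤ)+1+j) = ((A:ℚ)+1-(j:ℚ)) * ch (C+1+(A+1)) ((C:ℤ)+1+j) := by
    have h := chA (C+1+A) ((C:ℤ)+1+j)
    rw [show C+1+A+1 = C+1+(A+1) by omega] at h
    push_cast at h ⊢; linear_combination h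
  have a2 : ((A:ℚ)+(B:ℚ)+2) * ch (A+1+B) ((A:ℤ)+1+j) = ((B:ℚ)+1-(j:ℚ)) * ch (A+1+(B+1)) ((A:ℤ)+1+j) := by
    have h := chA (A+1+B) ((A:ℤ)+1+j)
    rw [show A+1+B+1 = A+1+(B+1) by omega] at h
    push_cast at h ⊢; linear_combination h
  have b2 : ((B:ℚ)+(C:ℚ)+2) * ch (B+(C+1)) ((B:ℤ)+j-1) = ((B:ℚ)+(j:ℚ)) * ch (B+1+(C+1)) ((B:ℤ)+j) := by
    have h := chB (B+(C+1)) ((B:ℤ)+j)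
    rw [show B+(C+1)+1 = B+1+(C+1) by omega] at h
    push_cast at h ⊢; linear_combination h
  have a3 : ((B:ℚ)+(C:ℚ)+2) * ch (B+1+C) ((B:ℤ)+j) = ((C:ℚ)+2-(j:ℚ)) * ch (B+1+(C+1)) ((B:ℤ)+j) := by
    have h := chA (B+1+C) ((B:ℤ)+j)
    rw [show B+1+C+1 = B+1+(C+1) by omega] at h
    push_cast at h ⊢; linear_combination h
  have b3 : ((C:ℚ)+(A:ℚ)+2) * ch (C+(A+1)) ((C:ℤ)+j) = ((C:ℚ)+1+(j:ℚ)) * ch (C+1+(A+1)) ((C:ℤ)+1+j) := by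
    have h := chB (C+(A+1)) ((C:ℤ)+1+j)
    rw [show (C:ℤ)+1+j-1 = (C:ℤ)+j by ring] at h
    rw [show C+(A+1)+1 = C+1+(A+1) by omega] at h
    push_cast at h ⊢; linear_combination h
  have c1 : ((A:ℚ)+1+(j:ℚ)+1) * ch (A+1+(B+1)) ((A:ℤ)+1+j+1) = ((B:ℚ)+1-(j:ℚ)) * ch (A+1+(B+1)) ((A:ℤ)+1+j) := by
    have h := chC (A+1+(B+1)) ((A:ℤ)+1+j)
    push_cast at h ⊢; linear_combination h
  have c2 : ((B:ℚ)+(j:ℚ)+1) * ch (B+1+(C+1)) ((B:ℤ)+j+1) = ((C:ℚ)+2-(j:ℚ)) * ch (B+1+(C+1)) ((B:ℤ)+j) := by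
    have h := chC (B+1+(C+1)) ((B:ℤ)+j)
    push_cast at h ⊢; linear_combination h
  have c3 : ((C:ℚ)+1+(j:ℚ)+1) * ch (C+1+(A+1)) ((C:ℤ)+1+j+1) = ((A:ℚ)+1-(j:ℚ)) * ch (C+1+(A+1)) ((C:ℤ)+1+j) := by
    have h := chC (C+1+(A+1)) ((C:ℤ)+1+j)
    push_cast at h ⊢; linear_combination h
  simp only [t]
  rw [zpow_add_one₀ (show (-1:ℚ) ≠ 0 by norm_num) j]
  push_cast
  rw [show (B:ℤ)+1+j-1 = (B:ℤ)+j by ring,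
      show (A:ℤ)+1+(j+1) = (A:ℤ)+1+j+1 by ring,
      show (B:ℤ)+1+(j+1)-1 = (B:ℤ)+j+1 by ring,
      show (C:ℤ)+1+(j+1) = (C:ℤ)+1+j+1 by ring]
  linear_combination
    (-(((B:ℚ)+C+2))*((-1:ℚ)^j)*(ch (B+1+(C+1)) ((B:ℤ)+j))*(((C:ℚ)+A+2))*(ch (C+1+A) ((C:ℤ)+1+j))) * b1
    + (-(((B:ℚ)+C+2))*((-1:ℚ)^j)*(ch (B+1+(C+1)) ((B:ℤ)+j))*(((A:ℚ)+1+(j:ℚ)))*(ch (A+1+(B+1)) ((A:ℤ)+1+j))) * a1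
    + (-(((C:ℚ)+A+2))*((-1:ℚ)^j)*(ch (C+1+(A+1)) ((C:ℤ)+1+j))*(((B:ℚ)+C+2))*(ch (B+(C+1)) ((B:ℤ)+j-1))) * a2
    + (-(((C:ℚ)+A+2))*((-1:ℚ)^j)*(ch (C+1+(A+1)) ((C:ℤ)+1+j))*(((B:ℚ)+1-(j:ℚ)))*(ch (A+1+(B+1)) ((A:ℤ)+1+j))) * b2
    + (-(((A:ℚ)+B+2))*((-1:ℚ)^j)*(ch (A+1+(B+1)) ((A:ℤ)+1+j))*(((C:ℚ)+A+2))*(ch (C+(A+1)) ((C:ℤ)+j))) * a3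
    + (-(((A:ℚ)+B+2))*((-1:ℚ)^j)*(ch (A+1+(B+1)) ((A:ℤ)+1+j))*(((C:ℚ)+2-(j:ℚ)))*(ch (B+1+(C+1)) ((B:ℤ)+j))) * b3
    + (-((-1:ℚ)^j)*(((B:ℚ)+(j:ℚ)+1))*(ch (B+1+(C+1)) ((B:ℤ)+j+1))*(((C:ℚ)+1+(j:ℚ)+1))*(ch (C+1+(A+1)) ((C:ℤ)+1+j+1))) * c1
    + (-((-1:ℚ)^j)*(((B:ℚ)+1-(j:ℚ)))*(ch (A+1+(B+1)) ((A:ℤ)+1+j))*(((C:ℚ)+1+(j:ℚ)+1))*(ch (C+1+(A+1)) ((C:ℤ)+1+j+1))) * c2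
    + (-((-1:ℚ)^j)*(((B:ℚ)+1-(j:ℚ)))*(ch (A+1+(B+1)) ((A:ℤ)+1+j))*(((C:ℚ)+2-(j:ℚ)))*(ch (B+1+(C+1)) ((B:ℤ)+j))) * c3


noncomputable def E (a b c : ℕ) : ℚ :=
  ∑ j ∈ Finset.Icc (-((a + b + c : ℕ) : ℤ)) ((a + b + c : ℕ) : ℤ), t a b c j

lemma ch_big {n : ℕ} {z : ℤ} (h : (n : ℤ) < z) : ch n z = 0 := by
  rcases lt_or_ge z 0 with h0 | h0
  · exact ch_neg h0
  · rw [ch, if_pos h0]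
    have : n < z.toNat := by omega
    simp [Nat.choose_eq_zero_of_lt this]

lemma t_zero_first_neg {a b c : ℕ} {j : ℤ} (h : j < -(a : ℤ)) : t a b c j = 0 := by
  rw [t, ch_neg (show (a : ℤ) + j < 0 by omega)]; ring

lemma t_zero_first_big {a b c : ℕ} {j : ℤ} (h : (b : ℤ) < j) : t a b c j = 0 := by
  rw [t, ch_big (show ((a + b : ℕ) : ℤ) < (a : ℤ) + j by push_cast; omega)]; ring

lemma t_zero_mid_neg {a b c : ℕ} {j : ℤ} (h : j < 1 - (b : ℤ)) : t a b c j = 0 := by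
  rw [t, ch_neg (show (b : ℤ) + j - 1 < 0 by omega)]; ring

lemma t_zero_mid_big {a b c : ℕ} {j : ℤ} (h : (c : ℤ) + 1 < j) : t a b c j = 0 := by
  rw [t, ch_big (show ((b + c : ℕ) : ℤ) < (b : ℤ) + j - 1 by push_cast; omega)]; ring

lemma t_zero_third_neg {a b c : ℕ} {j : ℤ} (h : j < -(c : ℤ)) : t a b c j = 0 := by
  rw [t, ch_neg (show (c : ℤ) + j < 0 by omega)]; ring

lemma t_zero_third_big {a b c : ℕ} {j : ℤ} (h : (a : ℤ) < j) : t a b c j = 0 := by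
  rw [t, ch_big (show ((c + a : ℕ) : ℤ) < (c : ℤ) + j by push_cast; omega)]; ring

lemma Icc_eq_map (lo : ℤ) (n : ℕ) :
    Finset.Icc lo (lo + n - 1) =
      Finset.map ⟨fun i : ℕ => lo + (i : ℤ), fun x y h => by exact_mod_cast add_left_cancel h⟩ (Finset.range n) := by
  ext x
  simp only [Finset.mem_Icc, Finset.mem_map, Finset.mem_range, Function.Embedding.coeFn_mk]
  constructor
  · rintro ⟨h1, h2⟩
    exact ⟨(x - lo).toNat, by omega, by show lo + ((x - lo).toNat : ℤ) = x; omega⟩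
  · rintro ⟨i, hi, rfl⟩
    show lo ≤ lo + (i : ℤ) ∧ lo + (i : ℤ) ≤ lo + n - 1
    omega

lemma sum_Icc_eq_range (g : ℤ → ℚ) (lo : ℤ) (n : ℕ) :
    ∑ j ∈ Finset.Icc lo (lo + n - 1), g j = ∑ i ∈ Finset.range n, g (lo + i) := by
  rw [Icc_eq_map, Finset.sum_map]
  rfl

lemma telescope (g : ℤ → ℚ) (M : ℕ) (h0 : g (-(M : ℤ)) = 0) (h1 : g ((M : ℤ) + 1) = 0) :
    ∑ j ∈ Finset.Icc (-(M : ℤ)) ((M : ℤ)), (g (j + 1) - g j) = 0 := by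
  have hb : ((M : ℤ)) = -(M : ℤ) + (2 * M + 1 : ℕ) - 1 := by push_cast; ring
  nth_rewrite 2 [hb]
  rw [sum_Icc_eq_range (fun j => g (j + 1) - g j) (-(M : ℤ)) (2 * M + 1)]
  have h := Finset.sum_range_sub (fun i : ℕ => g (-(M : ℤ) + i)) (2 * M + 1)
  have heq : ∀ i : ℕ, g (-(M : ℤ) + i + 1) - g (-(M : ℤ) + i)
      = g (-(M : ℤ) + (i + 1 : ℕ)) - g (-(M : ℤ) + i) := by
    intro i; push_cast; ring_nf
  calc ∑ i ∈ Finset.range (2 * M + 1), (g (-(M : ℤ) + i + 1) - g (-(M : ℤ) + i))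
      = ∑ i ∈ Finset.range (2 * M + 1), (g (-(M : ℤ) + (i + 1 : ℕ)) - g (-(M : ℤ) + i)) := by
        refine Finset.sum_congr rfl fun i _ => heq i
    _ = g (-(M : ℤ) + (2 * M + 1 : ℕ)) - g (-(M : ℤ) + (0 : ℕ)) := h
    _ = 0 := by
        rw [show -(M : ℤ) + ((2 * M + 1 : ℕ) : ℤ) = (M : ℤ) + 1 by push_cast; ring]
        rw [show -(M : ℤ) + ((0 : ℕ) : ℤ) = -(M : ℤ) by push_cast; ring]
        rw [h0, h1]; ring

lemma E_window (a b c M : ℕ) (h : a + b + c ≤ M) :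
    E a b c = ∑ j ∈ Finset.Icc (-(M : ℤ)) ((M : ℤ)), t a b c j := by
  refine Finset.sum_subset ?_ ?_
  · intro x hx
    simp only [Finset.mem_Icc] at hx ⊢
    omega
  · intro x hx hx'
    simp only [Finset.mem_Icc] at hx hx'
    rcases (by omega : x < -(a : ℤ) ∨ (b : ℤ) < x) with h' | h'
    · exact t_zero_first_neg h'
    · exact t_zero_first_big h'


lemma E_rec (A B C : ℕ) :
    E (A+1) (B+1) (C+1) = E A (B+1) (C+1) + E (A+1) B (C+1) + E (A+1) (B+1) C := by
  set M : ℕ := A + B + C + 3 with hM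
  have w0 := E_window (A+1) (B+1) (C+1) M (by omega)
  have w1 := E_window A (B+1) (C+1) M (by omega)
  have w2 := E_window (A+1) B (C+1) M (by omega)
  have w3 := E_window (A+1) (B+1) C M (by omega)
  have key : ((A : ℚ) + B + 2) * ((B : ℚ) + C + 2) * ((C : ℚ) + A + 2) *
      (E (A+1) (B+1) (C+1) - (E A (B+1) (C+1) + E (A+1) B (C+1) + E (A+1) (B+1) C)) = 0 := by
    rw [w0, w1, w2, w3]
    rw [show ∀ (s1 s2 s3 s4 : ℚ), s1 - (s2 + s3 + s4) = s1 - s2 - s3 - s4 from fun _ _ _ _ => by ring]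
    rw [← Finset.sum_sub_distrib, ← Finset.sum_sub_distrib, ← Finset.sum_sub_distrib,
        Finset.mul_sum]
    set g : ℤ → ℚ := fun j => (-(((j : ℚ) + A + 1) * ((j : ℚ) + B) * ((j : ℚ) + C + 1))) *
      t (A+1) (B+1) (C+1) j with hg
    have step : ∀ j ∈ Finset.Icc (-(M : ℤ)) ((M : ℤ)),
        ((A : ℚ) + B + 2) * ((B : ℚ) + C + 2) * ((C : ℚ) + A + 2) *
          (t (A+1) (B+1) (C+1) j - t A (B+1) (C+1) j - t (A+1) B (C+1) j - t (A+1) (B+1) C j)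
        = g (j+1) - g j := by
      intro j _
      rw [hg]
      have := pointwise A B C j
      push_cast
      push_cast at this
      linear_combination this
    rw [Finset.sum_congr rfl step]
    refine telescope g M ?_ ?_
    · rw [hg]
      have : t (A+1) (B+1) (C+1) (-(M : ℤ)) = 0 :=
        t_zero_first_neg (by push_cast; omega)
      simp [this]
    · rw [hg]
      have : t (A+1) (B+1) (C+1) ((M : ℤ) + 1) = 0 :=
        t_zero_first_big (by push_cast; omega)
      simp [this]
  have hne : ((A : ℚ) + B + 2) * ((B : ℚ) + C + 2) * ((C : ℚ) + A + 2) ≠ 0 := by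
    positivity
  have := mul_eq_zero.mp key
  rcases this with h | h
  · exact absurd h hne
  · linarith [h]

lemma E_b0 (a c : ℕ) : E a 0 c = 0 := by
  rw [E]
  refine Finset.sum_eq_zero fun j hj => ?_
  rcases le_or_gt j 0 with h | h
  · exact t_zero_mid_neg (by push_cast; omega)
  · exact t_zero_first_big (by push_cast; omega)

lemma E_a0 (B c : ℕ) : E 0 (B+1) c = (((B+1)+c).choose B : ℚ) := by
  rw [E]
  rw [Finset.sum_eq_single_of_mem 0 (by simp [Finset.mem_Icc]; omega)]
  · rw [t]
    rw [show ((0:ℕ):ℤ) + (0:ℤ) = ((0:ℕ):ℤ) by omega,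
        show (((B+1):ℕ):ℤ) + (0:ℤ) - 1 = ((B:ℕ):ℤ) by omega,
        show ((c:ℕ):ℤ) + (0:ℤ) = ((c:ℕ):ℤ) by omega,
        ch_ofNat, ch_ofNat, ch_ofNat]
    simp
  · intro j _ hj
    rcases lt_or_gt_of_ne hj with h | h
    · exact t_zero_first_neg (by push_cast; omega)
    · exact t_zero_third_big (by push_cast; omega)

lemma E_c0 (A B : ℕ) : E (A+1) (B+1) 0 =
    ((B:ℚ)+1) * (((A+1)+(B+1)).choose (A+1) : ℚ) - ((A:ℚ)+1) * (((A+1)+(B+1)).choose (A+2) : ℚ) := by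
  rw [E]
  have hsub : ({0, 1} : Finset ℤ) ⊆ Finset.Icc (-(((A+1)+(B+1)+0 : ℕ) : ℤ)) (((A+1)+(B+1)+0 : ℕ) : ℤ) := by
    intro x hx
    simp only [Finset.mem_insert, Finset.mem_singleton] at hx
    simp only [Finset.mem_Icc]
    rcases hx with rfl | rfl <;> push_cast <;> omega
  rw [← Finset.sum_subset hsub]
  · rw [Finset.sum_pair (by norm_num : (0:ℤ) ≠ 1)]
    rw [t, t]
    rw [show (((A+1):ℕ):ℤ) + (0:ℤ) = (((A+1):ℕ):ℤ) by omega,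
        show (((B+1):ℕ):ℤ) + (0:ℤ) - 1 = ((B:ℕ):ℤ) by omega,
        show (((0):ℕ):ℤ) + (0:ℤ) = (((0):ℕ):ℤ) by omega,
        show (((A+1):ℕ):ℤ) + (1:ℤ) = (((A+2):ℕ):ℤ) by omega,
        show (((B+1):ℕ):ℤ) + (1:ℤ) - 1 = (((B+1):ℕ):ℤ) by omega,
        show (((0):ℕ):ℤ) + (1:ℤ) = (((1):ℕ):ℤ) by omega,
        ch_ofNat, ch_ofNat, ch_ofNat, ch_ofNat, ch_ofNat, ch_ofNat]
    simp only [Nat.choose_succ_self_right, Nat.choose_self, Nat.choose_one_right,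
      Nat.choose_zero_right, zpow_zero, zpow_one]
    push_cast
    ring
  · intro j hj hj'
    simp only [Finset.mem_insert, Finset.mem_singleton] at hj'
    push_neg at hj'
    obtain ⟨h0, h1⟩ := hj'
    rcases lt_trichotomy j 0 with h | h | h
    · exact t_zero_third_neg (by push_cast; omega)
    · exact absurd h h0
    · exact t_zero_mid_big (by push_cast; omega)

lemma E_closed : ∀ n a b c : ℕ, a + b + c ≤ n →
    E a b c = (b:ℚ) * ((a+b+c).factorial : ℚ) /
      ((a.factorial : ℚ) * (b.factorial : ℚ) * (c.factorial : ℚ) * ((a:ℚ)+(c:ℚ)+1)) := by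
  intro n
  induction n with
  | zero =>
    intro a b c h
    obtain rfl : b = 0 := by omega
    rw [E_b0]; simp
  | succ n ih =>
    intro a b c h
    have fact_ne : ∀ m : ℕ, (m.factorial : ℚ) ≠ 0 := fun m => Nat.cast_ne_zero.mpr m.factorial_ne_zero
    rcases b with _ | B
    · rw [E_b0]; simp
    rcases a with _ | A
    · -- a = 0
      rw [E_a0]
      have hk := Nat.choose_mul_factorial_mul_factorial (show B ≤ (B+1)+c by omega)
      rw [show (B+1)+c - B = c+1 from by omega] at hk
      have hkq := congrArg (fun x : ℕ => (x:ℚ)) hk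
      push_cast [Nat.factorial_succ] at hkq
      rw [show (0:ℕ)+(B+1)+c = (B+1)+c from by omega]
      rw [eq_div_iff (by
        push_cast
        refine mul_ne_zero (mul_ne_zero (mul_ne_zero (fact_ne 0) ?_) (fact_ne c)) (by positivity)
        exact fact_ne (B+1))]
      push_cast [Nat.factorial_succ, Nat.factorial_zero]
      linear_combination ((B:ℚ)+1) * hkq
    rcases c with _ | C
    · -- c = 0
      rw [E_c0]
      have hr := Nat.choose_succ_right_eq ((A+1)+(B+1)) (A+1)
      rw [show (A+1)+(B+1) - (A+1) = B+1 from by omega] at hr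
      have hrq := congrArg (fun x : ℕ => (x:ℚ)) hr
      push_cast at hrq
      have hf := Nat.choose_mul_factorial_mul_factorial (show A+2 ≤ (A+1)+(B+1) by omega)
      rw [show (A+1)+(B+1) - (A+2) = B from by omega] at hf
      have hfq := congrArg (fun x : ℕ => (x:ℚ)) hf
      rw [show (A+2) = (A+1)+1 from rfl] at hfq
      push_cast [Nat.factorial_succ] at hfq
      rw [show (A+1)+(B+1)+0 = (A+1)+(B+1) from by omega]
      rw [eq_div_iff (by
        push_cast
        refine mul_ne_zero (mul_ne_zero (mul_ne_zero ?_ ?_) (fact_ne 0)) (by positivity)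
        exacts [fact_ne (A+1), fact_ne (B+1)])]
      push_cast [Nat.factorial_succ, Nat.factorial_zero]
      linear_combination
        (-((A:ℚ)+1) * (A.factorial : ℚ) * ((B:ℚ)+1) * (B.factorial : ℚ) * ((A:ℚ)+2)) * hrq
        + ((B:ℚ)+1) * hfq
    · -- main case
      have h1 := ih A (B+1) (C+1) (by omega)
      have h2 := ih (A+1) B (C+1) (by omega)
      have h3 := ih (A+1) (B+1) C (by omega)
      rw [E_rec, h1, h2, h3]
      rw [show A+(B+1)+(C+1) = A+B+C+2 from by omega,
          show (A+1)+B+(C+1) = A+B+C+2 from by omega,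
          show (A+1)+(B+1)+C = A+B+C+2 from by omega,
          show (A+1)+(B+1)+(C+1) = (A+B+C+2)+1 from by omega,
          Nat.factorial_succ (A+B+C+2),
          Nat.factorial_succ A, Nat.factorial_succ B, Nat.factorial_succ C]
      have d1 : (A:ℚ)+(C+1)+1 ≠ 0 := by positivity
      have d2 : (A:ℚ)+1+(C+1)+1 ≠ 0 := by positivity
      have d3 : (A:ℚ)+1+C+1 ≠ 0 := by positivity
      push_cast
      rw [div_add_div _ _ (by positivity) (by positivity), div_add_div _ _ (by positivity) (by positivity),
          div_eq_div_iff (by positivity) (by positivity)]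
      ring

lemma ch_reflect (n m : ℕ) : ch n ((n:ℤ) - (m:ℤ)) = (n.choose m : ℚ) := by
  rcases le_or_gt m n with h | h
  · rw [show (n:ℤ) - (m:ℤ) = ((n - m : ℕ) : ℤ) by omega, ch_ofNat, Nat.choose_symm h]
  · rw [ch_neg (by omega), Nat.choose_eq_zero_of_lt h, Nat.cast_zero]

lemma prod_desc : ∀ (m n : ℕ), m ≤ n →
    (∏ j ∈ Finset.range m, ((n:ℚ) - (j:ℚ))) * (((n-m).factorial : ℕ) : ℚ) = (n.factorial : ℚ) := by
  intro m
  induction m with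
  | zero => intro n _; simp
  | succ m ih =>
    intro n h
    have ihn := ih n (by omega)
    rw [Finset.prod_range_succ]
    rw [show n - m = (n-(m+1))+1 from by omega, Nat.factorial_succ] at ihn
    have hc : (((n-(m+1))+1 : ℕ) : ℚ) = (n:ℚ) - (m:ℚ) := by
      push_cast [Nat.cast_sub (show m+1 ≤ n from h)]; ring
    push_cast at ihn hc ⊢
    rw [hc] at ihn
    linear_combination ihn

lemma S1_zero (e k : ℕ) (hk : 1 ≤ k) :
    ∑ a ∈ Finset.range (2*k), ((2*k-1).choose a : ℚ) * (e.choose a : ℚ) *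
      (e.choose (2*k-1-a) : ℚ) * (-1:ℚ)^a = 0 := by
  set F : ℕ → ℚ := fun a => ((2*k-1).choose a : ℚ) * (e.choose a : ℚ) *
      (e.choose (2*k-1-a) : ℚ) * (-1:ℚ)^a with hF
  have key : ∀ a ∈ Finset.range (2*k), F (2*k-1-a) = - F a := by
    intro a ha
    simp only [Finset.mem_range] at ha
    have h1 : (2*k-1).choose (2*k-1-a) = (2*k-1).choose a := Nat.choose_symm (by omega)
    have h2 : 2*k-1-(2*k-1-a) = a := by omega
    have hsgn : (-1:ℚ)^(2*k-1-a) * (-1:ℚ)^a = -1 := by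
      rw [← pow_add, show 2*k-1-a+a = 2*k-1 from by omega]
      exact Odd.neg_one_pow ⟨k-1, by omega⟩
    have hsq : (-1:ℚ)^a * (-1:ℚ)^a = 1 := by
      rw [← pow_add]; exact Even.neg_one_pow ⟨a, rfl⟩
    rw [hF]
    simp only [h1, h2]
    linear_combination (((2*k-1).choose a : ℚ) * (e.choose (2*k-1-a) : ℚ) * (e.choose a : ℚ) * (-1:ℚ)^a) * hsgn
      + (-(((2*k-1).choose a : ℚ) * (e.choose (2*k-1-a) : ℚ) * (e.choose a : ℚ) * (-1:ℚ)^(2*k-1-a))) * hsq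
  have h2 : ∑ a ∈ Finset.range (2*k), F (2*k-1-a) = ∑ a ∈ Finset.range (2*k), - F a :=
    Finset.sum_congr rfl key
  have h := Finset.sum_range_reflect F (2*k)
  rw [h2, Finset.sum_neg_distrib] at h
  linarith [h]

lemma E_eq_sum (e k : ℕ) (hk : 1 ≤ k) (hke : k ≤ e) :
    E k k (e - k) = (-1:ℚ)^k * ∑ a ∈ Finset.range (2*k),
      (-1:ℚ)^(a+1) * ((2*k).choose (a+1) : ℚ) * (e.choose a : ℚ) * (e.choose (2*k-1-a) : ℚ) := by
  rw [E, show k+k+(e-k) = e+k from by omega]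
  have hsub : Finset.Icc (1-(k:ℤ)) (k:ℤ) ⊆ Finset.Icc (-((e+k : ℕ):ℤ)) ((e+k : ℕ):ℤ) := by
    intro x hx
    simp only [Finset.mem_Icc] at hx ⊢
    omega
  rw [← Finset.sum_subset hsub (fun j hj hj' => by
    simp only [Finset.mem_Icc] at hj hj'
    rcases (by omega : j < 1-(k:ℤ) ∨ (k:ℤ) < j) with h | h
    · exact t_zero_mid_neg (by omega)
    · exact t_zero_first_big h)]
  have hIcc := sum_Icc_eq_range (t k k (e-k)) (1-(k:ℤ)) (2*k)
  rw [show (1:ℤ)-(k:ℤ)+((2*k:ℕ):ℤ)-1 = (k:ℤ) from by push_cast; ring] at hIcc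
  rw [hIcc, Finset.mul_sum]
  refine Finset.sum_congr rfl fun a ha => ?_
  simp only [Finset.mem_range] at ha
  rw [t]
  rw [show k+(e-k) = e from by omega, show (e-k)+k = e from by omega]
  rw [show k+k = 2*k from by ring]
  rw [show (k:ℤ) + (1-(k:ℤ)+(a:ℤ)) - 1 = ((a : ℕ):ℤ) from by push_cast; ring,
      show (k:ℤ) + (1-(k:ℤ)+(a:ℤ)) = ((a+1 : ℕ):ℤ) from by push_cast; ring,
      show ((e-k : ℕ):ℤ) + (1-(k:ℤ)+(a:ℤ)) = (e:ℤ) - ((2*k-1-a : ℕ):ℤ) from by omega]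
  rw [ch_ofNat, ch_ofNat, ch_reflect]
  have h2 : (-1:ℚ)^(1-(k:ℤ)+(a:ℤ)) * (-1:ℚ)^((k:ℕ):ℤ) = (-1:ℚ)^(((a+1:ℕ)):ℤ) := by
    rw [← zpow_add₀ (show (-1:ℚ) ≠ 0 by norm_num),
        show 1-(k:ℤ)+(a:ℤ)+((k:ℕ):ℤ) = ((a+1:ℕ):ℤ) from by push_cast; ring]
  rw [zpow_natCast, zpow_natCast] at h2
  have hsq : (-1:ℚ)^k * (-1:ℚ)^k = 1 := by
    rw [← pow_add]; exact Even.neg_one_pow ⟨k, rfl⟩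
  have hsgn : (-1:ℚ)^(1-(k:ℤ)+(a:ℤ)) = (-1:ℚ)^k * (-1:ℚ)^(a+1) := by
    linear_combination ((-1:ℚ)^k) * h2 + (-((-1:ℚ)^(1-(k:ℤ)+(a:ℤ)))) * hsq
  rw [hsgn]
  ring

theorem stmt14' (e k : ℕ) (he : 1 ≤ e) (hk1 : 1 ≤ k) (hke : k ≤ e) :
    (((e : ℚ) + 1) * (2 * k) *
        ∑ a ∈ Finset.range (2 * k), ((2 * k - 1).choose a : ℚ) *
          (e.choose a : ℚ) * (e.choose (2 * k - 1 - a) : ℚ) * (-1) ^ a *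
          (a : ℚ) / ((a : ℚ) + 1)) =
      (-1) ^ k * (∏ j ∈ Finset.range (2 * k), ((e : ℚ) + (k : ℚ) - (j : ℚ))) /
        ((k : ℚ) * ((k - 1).factorial : ℚ) ^ 2) ∧
    (((e : ℚ) + 1) * (2 * k) *
        ∑ a ∈ Finset.range (2 * k), ((2 * k - 1).choose a : ℚ) *
          (e.choose a : ℚ) * (e.choose (2 * k - 1 - a) : ℚ) * (-1) ^ a *
          (a : ℚ) / ((a : ℚ) + 1)) ≠ 0 := by
  obtain ⟨K, hkk⟩ : ∃ K, k = K + 1 := ⟨k - 1, by omega⟩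
  set V : ℚ := (-1:ℚ)^k * (k:ℚ) * ((e+k).factorial : ℚ) /
      ((k.factorial : ℚ) * (k.factorial : ℚ) * (((e-k).factorial : ℕ) : ℚ)) with hV
  have hterm : ∀ a ∈ Finset.range (2*k),
      (2*(k:ℚ)) * (((2 * k - 1).choose a : ℚ) * (e.choose a : ℚ) * (e.choose (2 * k - 1 - a) : ℚ) * (-1) ^ a *
          (a : ℚ) / ((a : ℚ) + 1))
      = (2*(k:ℚ)) * (((2 * k - 1).choose a : ℚ) * (e.choose a : ℚ) * (e.choose (2 * k - 1 - a) : ℚ) * (-1:ℚ)^a)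
        + ((-1:ℚ)^(a+1) * ((2*k).choose (a+1) : ℚ) * (e.choose a : ℚ) * (e.choose (2*k-1-a) : ℚ)) := by
    intro a _
    have hc := congrArg (fun x : ℕ => (x:ℚ)) (Nat.add_one_mul_choose_eq (2*k-1) a)
    rw [show 2*k-1+1 = 2*k from by omega] at hc
    push_cast at hc
    have ha1 : ((a:ℚ)+1) ≠ 0 := by positivity
    rw [← mul_div_assoc, div_eq_iff ha1]
    linear_combination ((-1:ℚ)^(a+1) * (e.choose a : ℚ) * (e.choose (2*k-1-a) : ℚ)) * hc
  have hsum : (2*(k:ℚ)) * (∑ a ∈ Finset.range (2 * k), ((2 * k - 1).choose a : ℚ) *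
          (e.choose a : ℚ) * (e.choose (2 * k - 1 - a) : ℚ) * (-1) ^ a *
          (a : ℚ) / ((a : ℚ) + 1))
      = (-1:ℚ)^k * E k k (e-k) := by
    rw [Finset.mul_sum, Finset.sum_congr rfl hterm, Finset.sum_add_distrib, ← Finset.mul_sum,
        S1_zero e k (by omega), mul_zero, zero_add]
    have hE := E_eq_sum e k (by omega) hke
    have hsq : (-1:ℚ)^k * (-1:ℚ)^k = 1 := by
      rw [← pow_add]; exact Even.neg_one_pow ⟨k, rfl⟩
    rw [hE, ← mul_assoc, hsq, one_mul]
  have hEval : E k k (e-k) = (k:ℚ) * ((e+k).factorial : ℚ) /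
      ((k.factorial : ℚ) * (k.factorial : ℚ) * (((e-k).factorial : ℕ) : ℚ) * ((e:ℚ)+1)) := by
    rw [E_closed (k+k+(e-k)) k k (e-k) le_rfl]
    rw [show k+k+(e-k) = e+k from by omega]
    have : ((k:ℚ) + ((e-k : ℕ):ℚ) + 1) = (e:ℚ)+1 := by
      push_cast [Nat.cast_sub hke]; ring
    rw [this]
  have hkf2 : ((k.factorial : ℕ) : ℚ) ≠ 0 := Nat.cast_ne_zero.mpr k.factorial_ne_zero
  have hef : (((e-k).factorial : ℕ) : ℚ) ≠ 0 := Nat.cast_ne_zero.mpr (e-k).factorial_ne_zero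
  have he1 : ((e:ℚ)+1) ≠ 0 := by positivity
  have hL : (((e : ℚ) + 1) * (2 * k) *
        ∑ a ∈ Finset.range (2 * k), ((2 * k - 1).choose a : ℚ) *
          (e.choose a : ℚ) * (e.choose (2 * k - 1 - a) : ℚ) * (-1) ^ a *
          (a : ℚ) / ((a : ℚ) + 1)) = V := by
    rw [mul_assoc, hsum, hEval, hV]
    field_simp
  have hprod : (∏ j ∈ Finset.range (2 * k), ((e : ℚ) + (k : ℚ) - (j : ℚ))) * (((e-k).factorial : ℕ) : ℚ)
      = ((e+k).factorial : ℚ) := by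
    have hpd := prod_desc (2*k) (e+k) (by omega)
    rw [show e+k-2*k = e-k from by omega] at hpd
    rw [← hpd]
    congr 1
    refine Finset.prod_congr rfl fun j _ => by push_cast; ring
  have hR : ((-1:ℚ)) ^ k * (∏ j ∈ Finset.range (2 * k), ((e : ℚ) + (k : ℚ) - (j : ℚ))) /
        ((k : ℚ) * ((k - 1).factorial : ℚ) ^ 2) = V := by
    rw [hV]
    have hkm : k - 1 = K := by omega
    rw [hkm]
    have hkf : (k.factorial : ℚ) = (k:ℚ) * (K.factorial : ℚ) := by
      rw [hkk, Nat.factorial_succ]; push_cast; ring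
    rw [hkf]
    have hKf : ((K.factorial : ℕ) : ℚ) ≠ 0 := Nat.cast_ne_zero.mpr K.factorial_ne_zero
    have hkq : (k:ℚ) ≠ 0 := by positivity
    rw [div_eq_div_iff (by positivity) (by
      exact mul_ne_zero (mul_ne_zero (mul_ne_zero hkq hKf) (mul_ne_zero hkq hKf)) hef)]
    linear_combination ((-1:ℚ)^k * (k:ℚ)^2 * ((K.factorial : ℕ):ℚ)^2) * hprod
  refine ⟨hL.trans hR.symm, ?_⟩
  rw [hL, hV]
  have heF : (((e+k).factorial : ℕ) : ℚ) ≠ 0 := Nat.cast_ne_zero.mpr (e+k).factorial_ne_zero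
  refine div_ne_zero (mul_ne_zero (mul_ne_zero (pow_ne_zero _ (by norm_num)) (by positivity)) heF) ?_
  exact mul_ne_zero (mul_ne_zero hkf2 hkf2) hef

end Stmt14Aux

/-- Closed form and nonvanishing of `Q_{2k-1}`. -/
theorem stmt14 (e k : ℕ) (he : 1 ≤ e) (hk1 : 1 ≤ k) (hke : k ≤ e) :
    (((e : ℚ) + 1) * (2 * k) *
        ∑ a ∈ Finset.range (2 * k), ((2 * k - 1).choose a : ℚ) *
          (e.choose a : ℚ) * (e.choose (2 * k - 1 - a) : ℚ) * (-1) ^ a *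
          (a : ℚ) / ((a : ℚ) + 1)) =
      (-1) ^ k * (∏ j ∈ Finset.range (2 * k), ((e : ℚ) + (k : ℚ) - (j : ℚ))) /
        ((k : ℚ) * ((k - 1).factorial : ℚ) ^ 2) ∧
    (((e : ℚ) + 1) * (2 * k) *
        ∑ a ∈ Finset.range (2 * k), ((2 * k - 1).choose a : ℚ) *
          (e.choose a : ℚ) * (e.choose (2 * k - 1 - a) : ℚ) * (-1) ^ a *
          (a : ℚ) / ((a : ℚ) + 1)) ≠ 0 :=
  Stmt14Aux.stmt14' e k he hk1 hke
end

section
/- Let K be a field, V = K^{q+1} where q = |K| and K is finite with elements c_1,...,c_q. Let A = diag(1,1,...,1,0) and B = diag(c_1,...,c_q,1). Then every K-linear combination sA + tB (s,t ∈ K) is a singular matrix, but there exist s, t in an extension field L of K such that sA + tB is invertible over L. -/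
/-- Over a finite field `K` with `q` elements, the span of
`A = diag(1,…,1,0)` and `B = diag(c_1,…,c_q,1)` is singular over `K` but not
over an algebraic closure. -/
theorem stmt19 {K : Type*} [Field K] [Fintype K] (q : ℕ)
    (hq : Fintype.card K = q) (c : Fin q → K) (hc : Function.Bijective c)
    (A B : Matrix (Fin (q + 1)) (Fin (q + 1)) K)
    (hA : A = Matrix.diagonal (fun i => if i.val < q then 1 else 0))
    (hB : B = Matrix.diagonal (fun i => if h : i.val < q then c ⟨i.val, h⟩ else 1)) :
    (∀ s t : K, (s • A + t • B).det = 0) ∧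
      ∃ s t : AlgebraicClosure K,
        (s • A.map (algebraMap K (AlgebraicClosure K)) +
          t • B.map (algebraMap K (AlgebraicClosure K))).det ≠ 0 := by
  subst hA hB
  constructor
  · intro s t
    rw [← Matrix.diagonal_smul, ← Matrix.diagonal_smul, Matrix.diagonal_add,
      Matrix.det_diagonal]
    by_cases ht : t = 0
    · apply Finset.prod_eq_zero (Finset.mem_univ (Fin.last q))
      simp [Fin.last, ht]
    · obtain ⟨i, hi⟩ := hc.2 (-(s * t⁻¹))
      apply Finset.prod_eq_zero (Finset.mem_univ (Fin.castSucc i))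
      simp only [Pi.add_apply, Pi.smul_apply, smul_eq_mul]
      have : (Fin.castSucc i).val < q := i.isLt
      rw [if_pos this, dif_pos this]
      have : c ⟨(Fin.castSucc i).val, this⟩ = -(s * t⁻¹) := by
        convert hi using 2
        exact Fin.ext rfl
      rw [this]
      field_simp
      ring
  · classical
    let F : Finset (AlgebraicClosure K) :=
      Finset.image (fun i => -(algebraMap K (AlgebraicClosure K) (c i))) Finset.univ
    obtain ⟨s, hs⟩ := F.exists_notMem
    refine ⟨s, 1, ?_⟩
    rw [Matrix.diagonal_map (map_zero _), Matrix.diagonal_map (map_zero _),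
      ← Matrix.diagonal_smul, ← Matrix.diagonal_smul, Matrix.diagonal_add,
      Matrix.det_diagonal]
    rw [Finset.prod_ne_zero_iff]
    intro i _
    simp only [Pi.add_apply, Pi.smul_apply, Function.comp_apply, smul_eq_mul, one_mul]
    by_cases h : i.val < q
    · rw [if_pos h, dif_pos h, map_one, mul_one]
      intro hzero
      exact hs (Finset.mem_image.mpr ⟨⟨i.val, h⟩, Finset.mem_univ _,
        (eq_neg_of_add_eq_zero_left hzero).symm⟩)
    · rw [if_neg h, dif_neg h, map_zero, map_one, mul_zero, zero_add]
      exact one_ne_zero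
end
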